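/- Let q ≥ 2 be a power of 2. There exist functions φ : {1,…,q} → {1,…,2q−1} and r : {1,…,q} → 𝒫({1,…,2q−1}) such that: (1) for every c ∈ {1,…,q}, |r(c)| = 1 + log₂ q; (2) φ(c) ∈ r(c) for every c; and (3) for every pair of distinct colors c₁, c₂ ∈ {1,…,q}, there exists x ∈ r(c₁) ∩ r(c₂) with min{φ(c₁), φ(c₂)} < x < max{φ(c₁), φ(c₂)}. -/

import Mathlib

/-!
Label the complete binary tree with leaves `0, …, 2 ^ m - 1` in order, so that the node of
height `h` above the leaves `2 ^ h k, …, 2 ^ h (k + 1) - 1` gets the label `2 ^ h (2k + 1)`.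
Take `φ` to be the label of a leaf and `r` its root path. The path has one node per height,
and the height of a label is its 2-adic valuation, so `|r c| = m + 1`. For two distinct
leaves, their lowest common ancestor lies on both paths, and in-order puts it strictly
between the left subtree (containing the smaller leaf) and the right one.
-/

namespace InorderBinaryTree

def ancestor (h i : ℕ) : ℕ := 2 ^ h * (2 * (i / 2 ^ h) + 1)

def rootPath (m i : ℕ) : Finset ℕ := (Finset.range (m + 1)).image (ancestor · i)

lemma ancestor_zero (i : ℕ) : ancestor 0 i = 2 * i + 1 := by
  simp [ancestor]

lemma padicValNat_two_ancestor (h i : ℕ) : padicValNat 2 (ancestor h i) = h := by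
  have hodd : ¬ 2 ∣ 2 * (i / 2 ^ h) + 1 := by omega
  rw [ancestor, padicValNat.mul (by positivity) (by omega), padicValNat.prime_pow,
    padicValNat.eq_zero_of_not_dvd hodd, add_zero]

lemma ancestor_left_injective (i : ℕ) : Function.Injective (ancestor · i) :=
  fun h₁ h₂ heq => by simpa only [padicValNat_two_ancestor] using congrArg (padicValNat 2) heq

lemma ancestor_lt_two_pow {h m i : ℕ} (hm : h ≤ m) (hi : i < 2 ^ m) :
    ancestor h i < 2 ^ (m + 1) := by
  have hq : i / 2 ^ h < 2 ^ (m - h) := by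
    rw [← Nat.pow_div hm two_pos]
    exact Nat.div_lt_div_of_lt_of_dvd (pow_dvd_pow 2 hm) hi
  calc ancestor h i < 2 ^ h * (2 * 2 ^ (m - h)) := by
        unfold ancestor; gcongr; omega
    _ = 2 ^ (m + 1) := by rw [← pow_succ', ← pow_add]; congr 1; omega

lemma exists_lowest_common_ancestor {i j : ℕ} (hij : i < j) :
    ∃ h k, i / 2 ^ (h + 1) = k ∧ j / 2 ^ (h + 1) = k ∧
      i < (2 * k + 1) * 2 ^ h ∧ (2 * k + 1) * 2 ^ h ≤ j := by
  classical
  have hP : ∃ h, i / 2 ^ h = j / 2 ^ h :=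
    ⟨j, by rw [Nat.div_eq_of_lt (hij.trans Nat.lt_two_pow_self),
      Nat.div_eq_of_lt Nat.lt_two_pow_self]⟩
  obtain ⟨h, hh⟩ : ∃ h, Nat.find hP = h + 1 :=
    Nat.exists_eq_add_one.mpr ((Nat.find_pos hP).mpr (by simpa using hij.ne))
  have hsame : i / 2 ^ (h + 1) = j / 2 ^ (h + 1) := hh ▸ Nat.find_spec hP
  have hdiff : i / 2 ^ h ≠ j / 2 ^ h := Nat.find_min hP (by omega)
  have hle : i / 2 ^ h ≤ j / 2 ^ h := Nat.div_le_div_right hij.le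
  have halve (n : ℕ) : n / 2 ^ h / 2 = n / 2 ^ (h + 1) := by
    rw [Nat.div_div_eq_div_mul, pow_succ]
  have := halve i
  have := halve j
  have hi : i / 2 ^ h = 2 * (i / 2 ^ (h + 1)) := by omega
  have hj : j / 2 ^ h = 2 * (i / 2 ^ (h + 1)) + 1 := by omega
  refine ⟨h, _, rfl, hsame.symm, ?_, ?_⟩
  · exact (Nat.div_lt_iff_lt_mul (by positivity)).mp (by omega)
  · exact (Nat.le_div_iff_mul_le (by positivity)).mp hj.ge

lemma ancestor_mem_rootPath {h m : ℕ} (i : ℕ) (hm : h ≤ m) : ancestor h i ∈ rootPath m i :=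
  Finset.mem_image_of_mem _ (Finset.mem_range.mpr (Nat.lt_succ_of_le hm))

lemma card_rootPath (m i : ℕ) : (rootPath m i).card = m + 1 := by
  rw [rootPath, Finset.card_image_of_injective _ (ancestor_left_injective i), Finset.card_range]

lemma rootPath_subset {m i : ℕ} (hi : i < 2 ^ m) :
    rootPath m i ⊆ Finset.Icc 1 (2 ^ (m + 1) - 1) := by
  simp only [Finset.subset_iff, rootPath, Finset.mem_image, Finset.mem_range, Finset.mem_Icc]
  rintro _ ⟨h, hm, rfl⟩
  have := ancestor_lt_two_pow (Nat.le_of_lt_succ hm) hi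
  have : 0 < ancestor h i := by unfold ancestor; positivity
  omega

lemma exists_mem_rootPath_inter_of_lt {m i j : ℕ} (hij : i < j) (hj : j < 2 ^ m) :
    ∃ x ∈ rootPath m i ∩ rootPath m j, 2 * i + 1 < x ∧ x < 2 * j + 1 := by
  obtain ⟨h, k, hi, hj', hlt, hle⟩ := exists_lowest_common_ancestor hij
  have hm : h + 1 ≤ m := by
    have : 2 ^ h < 2 ^ m := by nlinarith [Nat.one_le_two_pow (n := h)]
    exact (Nat.pow_lt_pow_iff_right (by norm_num)).mp this
  have hanc (n : ℕ) (hn : n / 2 ^ (h + 1) = k) :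
      ancestor (h + 1) n = 2 * ((2 * k + 1) * 2 ^ h) := by
    rw [ancestor, hn]; ring
  refine ⟨ancestor (h + 1) i, Finset.mem_inter.mpr ⟨ancestor_mem_rootPath i hm, ?_⟩, ?_, ?_⟩
  · rw [hanc i hi, ← hanc j hj']
    exact ancestor_mem_rootPath j hm
  all_goals rw [hanc i hi]; omega

lemma exists_mem_rootPath_inter_between {m i j : ℕ} (hij : i ≠ j) (hi : i < 2 ^ m)
    (hj : j < 2 ^ m) : ∃ x ∈ rootPath m i ∩ rootPath m j,
      min (2 * i + 1) (2 * j + 1) < x ∧ x < max (2 * i + 1) (2 * j + 1) := by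
  wlog hlt : i < j generalizing i j
  · rw [Finset.inter_comm, min_comm, max_comm]
    exact this hij.symm hj hi (by omega)
  rw [min_eq_left (by omega), max_eq_right (by omega)]
  exact exists_mem_rootPath_inter_of_lt hlt hj

end InorderBinaryTree

open InorderBinaryTree in
theorem stmt0_general (q : ℕ) (hpow : ∃ m, q = 2 ^ m) :
    ∃ (φ : ℕ → ℕ) (r : ℕ → Finset ℕ),
      (∀ c ∈ Finset.Icc 1 q,
        φ c ∈ Finset.Icc 1 (2 * q - 1) ∧
        r c ⊆ Finset.Icc 1 (2 * q - 1) ∧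
        (r c).card = 1 + Nat.log 2 q ∧
        φ c ∈ r c) ∧
      (∀ c₁ ∈ Finset.Icc 1 q, ∀ c₂ ∈ Finset.Icc 1 q, c₁ ≠ c₂ →
        ∃ x ∈ r c₁ ∩ r c₂,
          min (φ c₁) (φ c₂) < x ∧ x < max (φ c₁) (φ c₂)) := by
  obtain ⟨m, rfl⟩ := hpow
  have hleaf (c : ℕ) (hc : c ∈ Finset.Icc 1 (2 ^ m)) :
      c - 1 < 2 ^ m ∧ 2 * (c - 1) + 1 = 2 * c - 1 := by
    rw [Finset.mem_Icc] at hc; omega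
  rw [← pow_succ']
  refine ⟨fun c => 2 * c - 1, fun c => rootPath m (c - 1),
    fun c hc => ?_, fun c₁ hc₁ c₂ hc₂ hne => ?_⟩
  · obtain ⟨hi, hφ⟩ := hleaf c hc
    have hmem : 2 * c - 1 ∈ rootPath m (c - 1) := by
      rw [← hφ, ← ancestor_zero]; exact ancestor_mem_rootPath _ m.zero_le
    exact ⟨rootPath_subset hi hmem, rootPath_subset hi,
      by rw [card_rootPath, Nat.log_pow one_lt_two, add_comm], hmem⟩
  · obtain ⟨hi₁, hφ₁⟩ := hleaf c₁ hc₁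
    obtain ⟨hi₂, hφ₂⟩ := hleaf c₂ hc₂
    have hij : c₁ - 1 ≠ c₂ - 1 := by rw [Finset.mem_Icc] at hc₁ hc₂; omega
    simpa only [hφ₁, hφ₂] using exists_mem_rootPath_inter_between hij hi₁ hi₂

/-- Tree-coding lemma of Barenboim and Maimon: for `q ≥ 2` a power of 2,
there are maps `φ : {1,…,q} → {1,…,2q−1}` and `r : {1,…,q} → 𝒫({1,…,2q−1})`
with `|r c| = 1 + log₂ q`, `φ c ∈ r c`, and for distinct colors an element of
`r c₁ ∩ r c₂` strictly between `φ c₁` and `φ c₂`. -/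
theorem stmt0 (q : ℕ) (hq : 2 ≤ q) (hpow : ∃ m, q = 2 ^ m) :
    ∃ (φ : ℕ → ℕ) (r : ℕ → Finset ℕ),
      (∀ c ∈ Finset.Icc 1 q,
        φ c ∈ Finset.Icc 1 (2 * q - 1) ∧
        r c ⊆ Finset.Icc 1 (2 * q - 1) ∧
        (r c).card = 1 + Nat.log 2 q ∧
        φ c ∈ r c) ∧
      (∀ c₁ ∈ Finset.Icc 1 q, ∀ c₂ ∈ Finset.Icc 1 q, c₁ ≠ c₂ →
        ∃ x ∈ r c₁ ∩ r c₂,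
          min (φ c₁) (φ c₂) < x ∧ x < max (φ c₁) (φ c₂)) :=
  stmt0_general q hpow
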